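/- arXiv:2506.12839 — 4 statements merged into one kernel-verified Lean document; each statement's English description precedes it below -/
import Mathlib

section
/- Let n₀ ≥ 1, β ≥ 1, n₁ = β·n₀, K ≥ 1, and let Z⁽⁰⁾ : Fin n₀ → Fin K and Z⁽¹⁾ : Fin n₁ → Fin K be cluster assignments. Then Δ(Z) = 0 if and only if there exists a matching map T : Fin n₁ → Fin n₀, i.e., a surjective map with #T⁻¹({i}) = β for every i ∈ Fin n₀, such that Z⁽¹⁾(j) = Z⁽⁰⁾(T(j)) for all j ∈ Fin n₁. -/
/-- The group-fairness level Δ(Z) for two cluster assignments. -/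
noncomputable def fairnessLevel {n₀ n₁ K : ℕ}
    (Z0 : Fin n₀ → Fin K) (Z1 : Fin n₁ → Fin K) : ℝ :=
  (1 / 2) * ∑ k : Fin K,
    |((Finset.univ.filter (fun i => Z0 i = k)).card : ℝ) / n₀
      - ((Finset.univ.filter (fun j => Z1 j = k)).card : ℝ) / n₁|

/-!
Δ(Z) = 0 says exactly that every cluster `k` holds `β` times as many points of the second
group as of the first. Blowing each point of the first group up into `β` copies (the type
`Fin n₀ × Fin β`) turns this into equal fibre sizes of two colourings, which glue to a
colour-preserving bijection `Fin n₁ ≃ Fin n₀ × Fin β`; its first coordinate is the matching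
map. Conversely, a matching map with fibres of size `β` multiplies every cluster size by `β`.
-/

open Finset

section Fibres

variable {α γ κ : Type*} [Fintype α] [DecidableEq γ]

theorem surjective_of_card_fiber {T : α → γ} {β : ℕ} (hβ : β ≠ 0)
    (hT : ∀ c, #{a | T a = c} = β) : Function.Surjective T := by
  intro c
  obtain ⟨a, ha⟩ := card_ne_zero.mp ((hT c).trans_ne hβ)
  exact ⟨a, (mem_filter.mp ha).2⟩

variable [Fintype γ]

theorem card_filter_comp_eq_mul_of_card_fiber {T : α → γ} {β : ℕ}
    (hT : ∀ c, #{a | T a = c} = β) (p : γ → Prop) [DecidablePred p] :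
    #{a | p (T a)} = β * #{c | p c} := by
  rw [card_eq_sum_card_fiberwise (f := T) (t := {c | p c}) (by intro a; simp), sum_const_nat,
    mul_comm]
  intro c hc
  rw [← hT c]
  congr 1
  ext a
  simp only [mem_filter, mem_univ, true_and, and_iff_right_iff_imp]
  rintro rfl
  simpa using hc

theorem card_filter_fst_eq (B : Type*) [Fintype B] (c : γ) :
    #{p : γ × B | p.1 = c} = Fintype.card B := by
  rw [show ({p : γ × B | p.1 = c} : Finset _) = {c} ×ˢ univ by ext ⟨a, b⟩; simp [eq_comm],
    card_product, card_singleton, one_mul, card_univ]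

theorem exists_equiv_prod_of_card_filter_eq [DecidableEq κ] {β : ℕ} {f : α → κ} {g : γ → κ}
    (h : ∀ k, #{a | f a = k} = β * #{c | g c = k}) :
    ∃ e : α ≃ γ × Fin β, ∀ a, g (e a).1 = f a := by
  have hfib : ∀ k, Fintype.card {a // f a = k} = Fintype.card {p : γ × Fin β // g p.1 = k} := by
    intro k
    rw [Fintype.card_subtype, Fintype.card_subtype, h k]
    exact (card_filter_comp_eq_mul_of_card_fiber (T := Prod.fst)
      (fun c => by simpa using card_filter_fst_eq (Fin β) c) (g · = k)).symm
  exact ⟨Equiv.ofFiberEquiv fun k => Fintype.equivOfCardEq (hfib k),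
    Equiv.ofFiberEquiv_map (g := fun p : γ × Fin β => g p.1) _⟩

theorem card_filter_fst_equiv_eq (B : Type*) [Fintype B] (e : α ≃ γ × B) (c : γ) :
    #{a | (e a).1 = c} = Fintype.card B := by
  rw [← card_filter_fst_eq B c]
  exact card_equiv e (by simp)

end Fibres

theorem fairnessLevel_eq_zero_iff {n₀ n₁ K : ℕ} (Z0 : Fin n₀ → Fin K) (Z1 : Fin n₁ → Fin K) :
    fairnessLevel Z0 Z1 = 0 ↔
      ∀ k, (#{i | Z0 i = k} : ℝ) / n₀ = (#{j | Z1 j = k} : ℝ) / n₁ := by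
  simp [fairnessLevel, sum_eq_zero_iff_of_nonneg, sub_eq_zero]

theorem fairnessLevel_eq_zero_iff_card_eq_mul {n₀ β K : ℕ} (hn₀ : n₀ ≠ 0) (hβ : β ≠ 0)
    (Z0 : Fin n₀ → Fin K) (Z1 : Fin (β * n₀) → Fin K) :
    fairnessLevel Z0 Z1 = 0 ↔ ∀ k, #{j | Z1 j = k} = β * #{i | Z0 i = k} := by
  have hn₀R : (n₀ : ℝ) ≠ 0 := by exact_mod_cast hn₀
  rw [fairnessLevel_eq_zero_iff]
  refine forall_congr' fun k => ?_
  rw [Nat.cast_mul, div_eq_div_iff hn₀R (by positivity), ← Nat.cast_inj (R := ℝ), Nat.cast_mul]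
  constructor <;> intro h
  · exact mul_right_cancel₀ hn₀R (by linear_combination -h)
  · linear_combination -h * n₀

theorem perfectly_fair_iff_exists_matching_map_general
    (n₀ n₁ β K : ℕ) (hn₀ : 1 ≤ n₀) (hβ : 1 ≤ β) (hn₁ : n₁ = β * n₀)
    (Z0 : Fin n₀ → Fin K) (Z1 : Fin n₁ → Fin K) :
    fairnessLevel Z0 Z1 = 0 ↔
      ∃ T : Fin n₁ → Fin n₀,
        Function.Surjective T ∧
        (∀ i : Fin n₀, (Finset.univ.filter (fun j => T j = i)).card = β) ∧
        (∀ j : Fin n₁, Z1 j = Z0 (T j)) := by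
  subst hn₁
  rw [fairnessLevel_eq_zero_iff_card_eq_mul (by omega) (by omega)]
  constructor
  · intro h
    obtain ⟨e, he⟩ := exists_equiv_prod_of_card_filter_eq h
    have hfib : ∀ i, #{j | (e j).1 = i} = β := fun i => by
      simpa using card_filter_fst_equiv_eq (Fin β) e i
    exact ⟨fun j => (e j).1, surjective_of_card_fiber (by omega) hfib, hfib, fun j => (he j).symm⟩
  · rintro ⟨T, -, hT, hZ⟩ k
    simp_rw [hZ]
    exact card_filter_comp_eq_mul_of_card_fiber hT (fun i => Z0 i = k)

/-- **Proposition 2.** For n₁ = β·n₀, the assignment Z is perfectly fair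
(Δ(Z) = 0) iff there is a matching map T : Fin n₁ → Fin n₀ (surjective, all
fibers of cardinality β) with Z⁽¹⁾(j) = Z⁽⁰⁾(T j) for all j. -/
theorem perfectly_fair_iff_exists_matching_map
    (n₀ n₁ β K : ℕ) (hn₀ : 1 ≤ n₀) (hβ : 1 ≤ β) (hn₁ : n₁ = β * n₀) (hK : 1 ≤ K)
    (Z0 : Fin n₀ → Fin K) (Z1 : Fin n₁ → Fin K) :
    fairnessLevel Z0 Z1 = 0 ↔
      ∃ T : Fin n₁ → Fin n₀,
        Function.Surjective T ∧
        (∀ i : Fin n₀, (Finset.univ.filter (fun j => T j = i)).card = β) ∧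
        (∀ j : Fin n₁, Z1 j = Z0 (T j)) :=
  perfectly_fair_iff_exists_matching_map_general n₀ n₁ β K hn₀ hβ hn₁ Z0 Z1
end

section
/- Let n₀ ≥ 1, β ≥ 1, and n₁ = β·n₀ + r with 0 < r < n₀, and K ≥ 1. Let Z⁽⁰⁾ : Fin n₀ → Fin K and Z⁽¹⁾ : Fin n₁ → Fin K be cluster assignments with Δ(Z) = 0. Then there exists a surjective function T : Fin n₁ → Fin n₀ such that every fiber T⁻¹({i}) has size β or β + 1, the set R_T := {i : #T⁻¹({i}) = β + 1} has exactly r elements, and Z⁽¹⁾(j) = Z⁽⁰⁾(T(j)) for all j ∈ Fin n₁. -/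
/-!
Perfect fairness says that every cluster `k`, of sizes `c₀ k` in group 0 and `c₁ k` in group 1,
satisfies `n₁ c₀ k = n₀ c₁ k`; with `n₁ = β n₀ + r` and `r < n₀` this puts `c₁ k` between
`β c₀ k` and `(β + 1) c₀ k`. Inside cluster `k`, prescribe fibre size `β + 1` at `c₁ k - β c₀ k`
points of group 0 and `β` at the others: these sizes add up to `c₁ k`, so the points of group 1 in
cluster `k` can be distributed accordingly. Counting `n₁` through the fibres then shows that
exactly `n₁ - β n₀ = r` fibres have size `β + 1`.
-/

open Finset

section Fibers

variable {α γ κ : Type*} [Fintype α] [Fintype γ] [DecidableEq κ]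

theorem card_filter_sigma_eq_sum (f : α → κ) (m : α → ℕ) (k : κ) :
    #{s : Σ i, Fin (m i) | f s.1 = k} = ∑ i with f i = k, m i := by
  have : ({s : Σ i, Fin (m i) | f s.1 = k} : Finset _) =
      ({i | f i = k} : Finset α).sigma fun _ => univ := by
    ext; simp
  simp [this, card_sigma]

theorem exists_map_card_fiber_eq_of_sum_eq [DecidableEq α] (f : α → κ) (g : γ → κ) (m : α → ℕ)
    (hm : ∀ k, ∑ i with f i = k, m i = #{j | g j = k}) :
    ∃ T : γ → α, (∀ i, #{j | T j = i} = m i) ∧ ∀ j, g j = f (T j) := by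
  have hcard (k : κ) :
      Fintype.card {j // g j = k} = Fintype.card {s : Σ i, Fin (m i) // f s.1 = k} := by
    rw [Fintype.card_subtype, Fintype.card_subtype, card_filter_sigma_eq_sum, hm]
  let e : γ ≃ Σ i, Fin (m i) := .ofFiberEquiv fun k => Fintype.equivOfCardEq (hcard k)
  refine ⟨fun j => (e j).1, fun i => ?_,
    fun j => (Equiv.ofFiberEquiv_map (g := fun s : Σ i, Fin (m i) => f s.1) _ j).symm⟩
  calc #{j | (e j).1 = i} = Fintype.card {s : Σ i, Fin (m i) // s.1 = i} := by
        rw [← Fintype.card_subtype]; exact Fintype.card_congr (e.subtypeEquiv fun _ => Iff.rfl)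
    _ = m i := by rw [Fintype.card_congr (Equiv.sigmaSubtype i), Fintype.card_fin]

theorem exists_finset_card_filter_eq [DecidableEq α] (f : α → κ) (e : κ → ℕ)
    (he : ∀ k, e k ≤ #{i | f i = k}) :
    ∃ D : Finset α, ∀ k, #{i | f i = k ∧ i ∈ D} = e k := by
  choose D hDsub hDcard using fun k => exists_subset_card_eq (he k)
  refine ⟨({i | i ∈ D (f i)} : Finset α), fun k => ?_⟩
  convert hDcard k using 2
  ext i
  simp only [mem_filter, mem_univ, true_and]
  exact ⟨fun ⟨hk, hi⟩ => hk ▸ hi, fun hi => by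
    have hk := (mem_filter.1 (hDsub k hi)).2; exact ⟨hk, hk ▸ hi⟩⟩

theorem exists_map_card_fiber_eq_or_eq_succ [DecidableEq α] (f : α → κ) (g : γ → κ) (b : ℕ)
    (hlow : ∀ k, b * #{i | f i = k} ≤ #{j | g j = k})
    (hupp : ∀ k, #{j | g j = k} ≤ (b + 1) * #{i | f i = k}) :
    ∃ T : γ → α, (∀ i, #{j | T j = i} = b ∨ #{j | T j = i} = b + 1) ∧ ∀ j, g j = f (T j) := by
  obtain ⟨D, hD⟩ := exists_finset_card_filter_eq f
    (fun k => #{j | g j = k} - b * #{i | f i = k})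
    fun k => Nat.sub_le_iff_le_add.2 ((hupp k).trans_eq (by ring))
  have hsum (k : κ) : ∑ i with f i = k, (b + if i ∈ D then 1 else 0) = #{j | g j = k} := by
    rw [sum_add_distrib, sum_const, smul_eq_mul, sum_boole, Nat.cast_id, filter_filter, hD k,
      mul_comm]
    exact Nat.add_sub_of_le (hlow k)
  obtain ⟨T, hT, hgT⟩ := exists_map_card_fiber_eq_of_sum_eq f g _ hsum
  refine ⟨T, fun i => ?_, hgT⟩
  rw [hT]
  split_ifs <;> simp

theorem card_eq_mul_add_card_filter_card_fiber_eq_succ [DecidableEq α] (T : γ → α) (b : ℕ)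
    (hT : ∀ i, #{j | T j = i} = b ∨ #{j | T j = i} = b + 1) :
    Fintype.card γ = b * Fintype.card α + #{i | #{j | T j = i} = b + 1} := by
  calc Fintype.card γ = ∑ i, #{j | T j = i} := card_eq_sum_card_fiberwise fun _ _ => mem_univ _
    _ = ∑ i, (b + if #{j | T j = i} = b + 1 then 1 else 0) := by
        refine sum_congr rfl fun i _ => ?_
        rcases hT i with h | h <;> simp [h]
    _ = _ := by
        rw [sum_add_distrib, sum_const, sum_boole, card_univ, smul_eq_mul, Nat.cast_id, mul_comm]

end Fibers

theorem mul_card_eq_of_fairnessLevel_eq_zero {n₀ n₁ K : ℕ} {Z0 : Fin n₀ → Fin K}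
    {Z1 : Fin n₁ → Fin K} (h₀ : n₀ ≠ 0) (h₁ : n₁ ≠ 0) (h : fairnessLevel Z0 Z1 = 0) (k : Fin K) :
    n₁ * #{i | Z0 i = k} = n₀ * #{j | Z1 j = k} := by
  have hsum : ∑ k, |(#{i | Z0 i = k} : ℝ) / n₀ - (#{j | Z1 j = k} : ℝ) / n₁| = 0 := by
    simpa [fairnessLevel] using h
  have hk := abs_eq_zero.1 <|
    (sum_eq_zero_iff_of_nonneg fun _ _ => abs_nonneg _).1 hsum k (mem_univ k)
  rw [sub_eq_zero, div_eq_div_iff (by positivity) (by positivity)] at hk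
  rw [mul_comm n₁, mul_comm n₀]
  exact_mod_cast hk

theorem le_mul_and_le_succ_mul_of_mul_eq {n₀ n₁ β r a b : ℕ} (hrn : r < n₀)
    (hn₁ : n₁ = β * n₀ + r) (h : n₁ * a = n₀ * b) : β * a ≤ b ∧ b ≤ (β + 1) * a := by
  subst hn₁
  constructor <;> refine Nat.le_of_mul_le_mul_left ?_ (by omega : 0 < n₀) <;>
    nlinarith [Nat.mul_le_mul_right a hrn.le]

theorem perfectly_fair_exists_almost_matching_map_general
    (n₀ n₁ β r K : ℕ) (hβ : 1 ≤ β) (hrn : r < n₀)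
    (hn₁ : n₁ = β * n₀ + r)
    (Z0 : Fin n₀ → Fin K) (Z1 : Fin n₁ → Fin K)
    (hfair : fairnessLevel Z0 Z1 = 0) :
    ∃ T : Fin n₁ → Fin n₀,
      Function.Surjective T ∧
      (∀ i : Fin n₀, (Finset.univ.filter (fun j => T j = i)).card = β ∨
        (Finset.univ.filter (fun j => T j = i)).card = β + 1) ∧
      (Finset.univ.filter
        (fun i : Fin n₀ => (Finset.univ.filter (fun j => T j = i)).card = β + 1)).card = r ∧
      (∀ j : Fin n₁, Z1 j = Z0 (T j)) := by
  have hn₁_pos : n₁ ≠ 0 := by have := Nat.mul_le_mul_right n₀ hβ; omega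
  have hbounds (k : Fin K) := le_mul_and_le_succ_mul_of_mul_eq hrn hn₁ <|
    mul_card_eq_of_fairnessLevel_eq_zero (by omega) hn₁_pos hfair k
  obtain ⟨T, hT, hZ⟩ := exists_map_card_fiber_eq_or_eq_succ Z0 Z1 β
    (fun k => (hbounds k).1) fun k => (hbounds k).2
  refine ⟨T, fun i => ?_, hT, ?_, hZ⟩
  · have hpos : 0 < #{j | T j = i} := by rcases hT i with h | h <;> omega
    obtain ⟨j, hj⟩ := card_pos.1 hpos
    exact ⟨j, (mem_filter.1 hj).2⟩
  · have := card_eq_mul_add_card_filter_card_fiber_eq_succ T β hT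
    simp only [Fintype.card_fin] at this
    omega

/-- **Proposition 3.** For n₁ = β·n₀ + r with 0 < r < n₀, any perfectly fair
assignment Z admits a surjective map T : Fin n₁ → Fin n₀ whose fibers have
size β or β+1, with exactly r fibers of size β+1, and such that
Z⁽¹⁾(j) = Z⁽⁰⁾(T j) for all j. -/
theorem perfectly_fair_exists_almost_matching_map
    (n₀ n₁ β r K : ℕ) (hn₀ : 1 ≤ n₀) (hβ : 1 ≤ β) (hr : 0 < r) (hrn : r < n₀)
    (hn₁ : n₁ = β * n₀ + r) (hK : 1 ≤ K)
    (Z0 : Fin n₀ → Fin K) (Z1 : Fin n₁ → Fin K)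
    (hfair : fairnessLevel Z0 Z1 = 0) :
    ∃ T : Fin n₁ → Fin n₀,
      Function.Surjective T ∧
      (∀ i : Fin n₀, (Finset.univ.filter (fun j => T j = i)).card = β ∨
        (Finset.univ.filter (fun j => T j = i)).card = β + 1) ∧
      (Finset.univ.filter
        (fun i : Fin n₀ => (Finset.univ.filter (fun j => T j = i)).card = β + 1)).card = r ∧
      (∀ j : Fin n₁, Z1 j = Z0 (T j)) :=
  perfectly_fair_exists_almost_matching_map_general n₀ n₁ β r K hβ hrn hn₁ Z0 Z1 hfair
end

section
/- Let n₀ ≥ 1, β ≥ 1, n₁ = β·n₀ + r with 0 < r < n₀, and K ≥ 1. Let T : Fin n₁ → Fin n₀ be surjective with every fiber of size β or β + 1 and with R_T := {i : #T⁻¹({i}) = β + 1} of size r. Let Z⁽⁰⁾ : Fin n₀ → Fin K be arbitrary and define Z⁽¹⁾ : Fin n₁ → Fin K by Z⁽¹⁾(j) := Z⁽⁰⁾(T(j)). If for every k ∈ Fin K one has r · #{i : Z⁽⁰⁾(i) = k} = n₀ · #({i : Z⁽⁰⁾(i) = k} ∩ R_T), then Δ(Z) = 0. -/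
open Finset

theorem card_filter_comp_eq_sum_card_fiber {α β γ : Type*} [Fintype α] [Fintype β]
    [DecidableEq β] [DecidableEq γ] (f : α → β) (g : β → γ) (c : γ) :
    #{a | g (f a) = c} = ∑ b ∈ {b | g b = c}, #{a | f a = b} := by
  rw [card_eq_sum_card_fiberwise (f := f) (t := {b | g b = c}) fun a ha => by simpa using ha]
  refine sum_congr rfl fun b hb => congrArg card (ext fun a => ?_)
  simp only [mem_filter, mem_univ, true_and] at hb ⊢
  exact ⟨And.right, fun h => ⟨h ▸ hb, h⟩⟩

theorem sum_eq_mul_card_add_card_filter_of_forall_eq_or_eq_succ {ι : Type*} (s : Finset ι)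
    (m : ℕ) (f : ι → ℕ) (hf : ∀ i ∈ s, f i = m ∨ f i = m + 1) :
    ∑ i ∈ s, f i = m * #s + #{i ∈ s | f i = m + 1} := by
  have hsplit : ∀ i ∈ s, f i = m + if f i = m + 1 then 1 else 0 := fun i hi => by
    rcases hf i hi with h | h <;> simp [h]
  rw [sum_congr rfl hsplit, sum_add_distrib, sum_const, smul_eq_mul, mul_comm, sum_boole,
    Nat.cast_id]

theorem sufficient_condition_perfect_fairness_general
    (n₀ n₁ β r K : ℕ) (hn₀ : 1 ≤ n₀) (hr : 0 < r)
    (hn₁ : n₁ = β * n₀ + r)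
    (T : Fin n₁ → Fin n₀)
    (hfiber : ∀ i : Fin n₀, (Finset.univ.filter (fun j => T j = i)).card = β ∨
      (Finset.univ.filter (fun j => T j = i)).card = β + 1)
    (Z0 : Fin n₀ → Fin K) (Z1 : Fin n₁ → Fin K)
    (hZ1 : ∀ j : Fin n₁, Z1 j = Z0 (T j))
    (hprop : ∀ k : Fin K,
      r * (Finset.univ.filter (fun i => Z0 i = k)).card =
        n₀ * ((Finset.univ.filter (fun i => Z0 i = k)) ∩
          (Finset.univ.filter
            (fun i : Fin n₀ => (Finset.univ.filter (fun j => T j = i)).card = β + 1))).card) :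
    fairnessLevel Z0 Z1 = 0 := by
  have hn₀' : (n₀ : ℝ) ≠ 0 := Nat.cast_ne_zero.mpr (by omega)
  have hn₁' : (n₁ : ℝ) ≠ 0 := Nat.cast_ne_zero.mpr (by omega)
  refine mul_eq_zero_of_right _ (sum_eq_zero fun k _ => ?_)
  set C : Finset (Fin n₀) := {i | Z0 i = k}
  set R : Finset (Fin n₀) := {i | #{j | T j = i} = β + 1}
  have hcard : #{j | Z1 j = k} = β * #C + #(C ∩ R) := by
    simp only [hZ1]
    rw [card_filter_comp_eq_sum_card_fiber T Z0 k, inter_filter, inter_univ]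
    exact sum_eq_mul_card_add_card_filter_of_forall_eq_or_eq_succ C β _ fun i _ => hfiber i
  have hcross : #C * n₁ = (β * #C + #(C ∩ R)) * n₀ := by
    rw [hn₁, mul_add, mul_comm _ r, hprop k]
    ring
  rw [abs_eq_zero, sub_eq_zero, hcard, div_eq_div_iff hn₀' hn₁']
  exact_mod_cast hcross

/-- **Proposition 4.** For n₁ = β·n₀ + r with 0 < r < n₀, if T : Fin n₁ → Fin n₀
is surjective with all fibers of size β or β+1 and exactly r fibers of size β+1
(the set R_T), Z⁽¹⁾ := Z⁽⁰⁾ ∘ T, and for every cluster k the proportion condition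
r · |C_k⁽⁰⁾| = n₀ · |C_k⁽⁰⁾ ∩ R_T| holds, then Z is perfectly fair: Δ(Z) = 0. -/
theorem sufficient_condition_perfect_fairness
    (n₀ n₁ β r K : ℕ) (hn₀ : 1 ≤ n₀) (hβ : 1 ≤ β) (hr : 0 < r) (hrn : r < n₀)
    (hn₁ : n₁ = β * n₀ + r) (hK : 1 ≤ K)
    (T : Fin n₁ → Fin n₀)
    (hsurj : Function.Surjective T)
    (hfiber : ∀ i : Fin n₀, (Finset.univ.filter (fun j => T j = i)).card = β ∨
      (Finset.univ.filter (fun j => T j = i)).card = β + 1)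
    (hRT : (Finset.univ.filter
      (fun i : Fin n₀ => (Finset.univ.filter (fun j => T j = i)).card = β + 1)).card = r)
    (Z0 : Fin n₀ → Fin K) (Z1 : Fin n₁ → Fin K)
    (hZ1 : ∀ j : Fin n₁, Z1 j = Z0 (T j))
    (hprop : ∀ k : Fin K,
      r * (Finset.univ.filter (fun i => Z0 i = k)).card =
        n₀ * ((Finset.univ.filter (fun i => Z0 i = k)) ∩
          (Finset.univ.filter
            (fun i : Fin n₀ => (Finset.univ.filter (fun j => T j = i)).card = β + 1))).card) :
    fairnessLevel Z0 Z1 = 0 :=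
  sufficient_condition_perfect_fairness_general n₀ n₁ β r K hn₀ hr hn₁ T hfiber Z0 Z1 hZ1 hprop
end

section
/- Let n₀ ≥ 1, β₁ ≥ 1, β₂ ≥ 1, n₁ = β₁·n₀, n₂ = β₂·n₀, and K ≥ 1. Let T₁ : Fin n₁ → Fin n₀ and T₂ : Fin n₂ → Fin n₀ be matching maps (surjective with all fibers of size β₁ and β₂ respectively), let T₀₁ : Fin n₁ → Fin n₀ and T₀₂ : Fin n₂ → Fin n₀ be arbitrary functions, and let E₁ ⊆ Fin n₁, E₂ ⊆ Fin n₂ with #E₁ = m₁ and #E₂ = m₂. Let Z⁽⁰⁾ : Fin n₀ → Fin K be arbitrary, and define Z⁽¹⁾ : Fin n₁ → Fin K by Z⁽¹⁾(j) := Z⁽⁰⁾(T₁(j)) for j ∉ E₁ and Z⁽¹⁾(j) := Z⁽⁰⁾(T₀₁(j)) for j ∈ E₁, and define Z⁽²⁾ : Fin n₂ → Fin K analogously using T₂, T₀₂, E₂. Then the three-group fairness level satisfies Δ₃(Z) ≤ (1/2) · (m₁/n₁ + m₂/n₂). -/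
/-- The three-group fairness level Δ₃(Z): the generalized fairness measure
Δ(Z) = (1/(2(B−1))) Σ_k Σ_{b=1}^{B−1} |·| with B = 3 groups. -/
noncomputable def fairnessLevel3 {n₀ n₁ n₂ K : ℕ}
    (Z0 : Fin n₀ → Fin K) (Z1 : Fin n₁ → Fin K) (Z2 : Fin n₂ → Fin K) : ℝ :=
  (1 / 4) * ∑ k : Fin K,
    (|((Finset.univ.filter (fun i => Z0 i = k)).card : ℝ) / n₀
        - ((Finset.univ.filter (fun j => Z1 j = k)).card : ℝ) / n₁|
      + |((Finset.univ.filter (fun i => Z0 i = k)).card : ℝ) / n₀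
        - ((Finset.univ.filter (fun j => Z2 j = k)).card : ℝ) / n₂|)


open Finset

lemma one_group_bound {n₀ n K β m : ℕ} (hn : n = β * n₀)
    (hn₀ : 0 < n₀) (hβ : 0 < β)
    (T T₀ : Fin n → Fin n₀)
    (hfib : ∀ i : Fin n₀, (univ.filter (fun j => T j = i)).card = β)
    (E : Finset (Fin n)) (hE : E.card = m)
    (Z0 : Fin n₀ → Fin K) (Z : Fin n → Fin K)
    (hZ : ∀ j, Z j = if j ∈ E then Z0 (T₀ j) else Z0 (T j)) :
    ∑ k : Fin K,
      |((univ.filter (fun i => Z0 i = k)).card : ℝ) / n₀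
        - ((univ.filter (fun j => Z j = k)).card : ℝ) / n| ≤ 2 * m / n := by
  have hnpos : 0 < n := by rw [hn]; positivity
  have hnR : (0:ℝ) < n := by exact_mod_cast hnpos
  have hn₀R : (0:ℝ) < n₀ := by exact_mod_cast hn₀
  -- count of Z0∘T = k equals β * count0 k
  have hcountT : ∀ k : Fin K,
      ((univ.filter (fun j => Z0 (T j) = k)).card : ℕ)
        = (univ.filter (fun i => Z0 i = k)).card * β := by
    intro k
    have h := Finset.card_eq_sum_card_fiberwise
      (s := univ.filter (fun j => Z0 (T j) = k))
      (t := univ.filter (fun i => Z0 i = k)) (f := T)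
      (by intro x hx; simp at hx ⊢; exact hx)
    rw [h]
    rw [Finset.sum_congr rfl (fun i hi => ?_), Finset.sum_const, smul_eq_mul]
    · rw [← hfib i]
      congr 1
      ext j
      simp only [mem_filter, mem_univ, true_and] at hi ⊢
      constructor
      · rintro ⟨_, h2⟩; exact h2
      · intro h2; exact ⟨by rw [h2]; exact hi, h2⟩
  -- per-k bound
  have key : ∀ k : Fin K,
      |((univ.filter (fun i => Z0 i = k)).card : ℝ) / n₀
        - ((univ.filter (fun j => Z j = k)).card : ℝ) / n|
      ≤ (((E.filter (fun j => Z0 (T j) = k)).card : ℝ)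
          + ((E.filter (fun j => Z j = k)).card : ℝ)) / n := by
    intro k
    set A := univ.filter (fun j => Z0 (T j) = k) with hA
    set C := univ.filter (fun j => Z j = k) with hC
    have hA0 : ((univ.filter (fun i => Z0 i = k)).card : ℝ) / n₀ = (A.card : ℝ) / n := by
      rw [hA, hcountT k]
      have : (n:ℝ) = β * n₀ := by rw [hn]; push_cast; ring
      rw [this]
      push_cast
      field_simp
    rw [hA0, div_sub_div_same, abs_div, abs_of_pos hnR, div_le_div_iff_of_pos_right hnR]
    -- |A.card - C.card| ≤ (A∩E).card + (C∩E).card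
    have hsdiff : A \ E = C \ E := by
      ext j
      simp only [hA, hC, mem_sdiff, mem_filter, mem_univ, true_and]
      constructor
      · rintro ⟨h1, h2⟩; exact ⟨by rw [hZ j, if_neg h2]; exact h1, h2⟩
      · rintro ⟨h1, h2⟩; rw [hZ j, if_neg h2] at h1; exact ⟨h1, h2⟩
    have hAcard : A.card = (A ∩ E).card + (A \ E).card :=
      (Finset.card_inter_add_card_sdiff A E).symm
    have hCcard : C.card = (C ∩ E).card + (C \ E).card :=
      (Finset.card_inter_add_card_sdiff C E).symm
    have hAE : A ∩ E = E.filter (fun j => Z0 (T j) = k) := by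
      ext j; simp [hA, Finset.mem_inter, and_comm]
    have hCE : C ∩ E = E.filter (fun j => Z j = k) := by
      ext j; simp [hC, Finset.mem_inter, and_comm]
    rw [← hAE, ← hCE]
    rw [hAcard, hCcard, hsdiff]
    push_cast
    rw [add_sub_add_right_eq_sub]
    have h1 : (0:ℝ) ≤ ((A ∩ E).card : ℝ) := by positivity
    have h2 : (0:ℝ) ≤ ((C ∩ E).card : ℝ) := by positivity
    rw [abs_sub_le_iff]; constructor <;> linarith
  calc ∑ k : Fin K, |((univ.filter (fun i => Z0 i = k)).card : ℝ) / n₀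
        - ((univ.filter (fun j => Z j = k)).card : ℝ) / n|
      ≤ ∑ k : Fin K, (((E.filter (fun j => Z0 (T j) = k)).card : ℝ)
          + ((E.filter (fun j => Z j = k)).card : ℝ)) / n :=
        Finset.sum_le_sum (fun k _ => key k)
    _ = 2 * m / n := by
        rw [← Finset.sum_div]
        congr 1
        rw [Finset.sum_add_distrib]
        have p1 : ∑ k : Fin K, ((E.filter (fun j => Z0 (T j) = k)).card : ℝ) = m := by
          rw [← hE]
          have := Finset.card_eq_sum_card_fiberwise (s := E) (t := univ)
            (f := fun j => Z0 (T j)) (fun x _ => mem_univ _)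
          rw [this]; push_cast; rfl
        have p2 : ∑ k : Fin K, ((E.filter (fun j => Z j = k)).card : ℝ) = m := by
          rw [← hE]
          have := Finset.card_eq_sum_card_fiberwise (s := E) (t := univ)
            (f := Z) (fun x _ => mem_univ _)
          rw [this]; push_cast; rfl
        rw [p1, p2]; ring

/-- **Proposition (three sensitive groups).** With matching maps T₁, T₂,
arbitrary maps T₀₁, T₀₂ and exception sets E₁, E₂ of sizes m₁, m₂, the induced
assignment satisfies Δ₃(Z) ≤ (1/2)·(m₁/n₁ + m₂/n₂). -/
theorem relaxed_fairness_level_bound_three_groups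
    (n₀ n₁ n₂ β₁ β₂ m₁ m₂ K : ℕ)
    (hn₀ : 1 ≤ n₀) (hβ₁ : 1 ≤ β₁) (hβ₂ : 1 ≤ β₂)
    (hn₁ : n₁ = β₁ * n₀) (hn₂ : n₂ = β₂ * n₀) (hK : 1 ≤ K)
    (T₁ : Fin n₁ → Fin n₀) (T₂ : Fin n₂ → Fin n₀)
    (hsurj₁ : Function.Surjective T₁) (hsurj₂ : Function.Surjective T₂)
    (hfiber₁ : ∀ i : Fin n₀, (Finset.univ.filter (fun j => T₁ j = i)).card = β₁)
    (hfiber₂ : ∀ i : Fin n₀, (Finset.univ.filter (fun j => T₂ j = i)).card = β₂)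
    (T₀₁ : Fin n₁ → Fin n₀) (T₀₂ : Fin n₂ → Fin n₀)
    (E₁ : Finset (Fin n₁)) (E₂ : Finset (Fin n₂))
    (hE₁ : E₁.card = m₁) (hE₂ : E₂.card = m₂)
    (Z0 : Fin n₀ → Fin K) (Z1 : Fin n₁ → Fin K) (Z2 : Fin n₂ → Fin K)
    (hZ1 : ∀ j : Fin n₁, Z1 j = if j ∈ E₁ then Z0 (T₀₁ j) else Z0 (T₁ j))
    (hZ2 : ∀ j : Fin n₂, Z2 j = if j ∈ E₂ then Z0 (T₀₂ j) else Z0 (T₂ j)) :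
    fairnessLevel3 Z0 Z1 Z2 ≤ (1 / 2) * ((m₁ : ℝ) / n₁ + (m₂ : ℝ) / n₂) := by
  have h1 := one_group_bound hn₁ hn₀ hβ₁ T₁ T₀₁ hfiber₁ E₁ hE₁ Z0 Z1 hZ1
  have h2 := one_group_bound hn₂ hn₀ hβ₂ T₂ T₀₂ hfiber₂ E₂ hE₂ Z0 Z2 hZ2
  unfold fairnessLevel3
  rw [Finset.sum_add_distrib]
  have : (1/4 : ℝ) * ((2 * m₁ / n₁) + (2 * m₂ / n₂))
      = (1 / 2) * ((m₁ : ℝ) / n₁ + (m₂ : ℝ) / n₂) := by ring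
  rw [← this]
  have := add_le_add h1 h2
  nlinarith [this]
end
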